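/- The luckiness model complexity of the N-sample exponential model with luckiness the indicator of [θ_min, θ_max] equals (N^N/Γ(N))·e^{−N}·(log θ_max − log θ_min). That is, ∫_{(ℝ≥0)^N} p[(μ_{θ̂(x)})^N](x) · 1{θ̂(x) ∈ [θ_min, θ_max]} dL^N(x) = (N^N/Γ(N))·e^{−N}·log(θ_max/θ_min), where θ̂ is the sample mean. -/

import Mathlib

/-!
Writing `s = ∑ xₙ`, Lebesgue measure on the orthant `(ℝ≥0)^(n+1)` pushes forward to the
density `sⁿ / n!` on `(0, ∞)`: splitting off one coordinate and exchanging the order of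
integration over the triangle `0 < s < u` raises the exponent by one. On the window
`s / N ∈ [θ_min, θ_max]` the maximized likelihood times this density is
`N^N e^{-N} / ((N - 1)! s)`, whose integral is a logarithm.
-/

open MeasureTheory Set
open scoped ENNReal

theorem setLIntegral_Ioi_comp_add_right (f : ℝ → ℝ≥0∞) (a s : ℝ) :
    ∫⁻ y in Ioi a, f (y + s) = ∫⁻ u in Ioi (a + s), f u := by
  have h := (measurePreserving_add_right volume s).setLIntegral_comp_preimage_emb
    (measurableEmbedding_addRight s) f (Ioi (a + s))
  rwa [preimage_add_const_Ioi, add_sub_cancel_right] at h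

theorem lintegral_Ioi_lintegral_Ioi_swap {F : ℝ → ℝ → ℝ≥0∞}
    (hF : Measurable (Function.uncurry F)) (a : ℝ) :
    ∫⁻ s in Ioi a, ∫⁻ u in Ioi s, F s u = ∫⁻ u in Ioi a, ∫⁻ s in Ioo a u, F s u := by
  have hinner : ∀ s ∈ Ioi a, ∫⁻ u in Ioi s, F s u = ∫⁻ u in Ioi a, (Ioi s).indicator (F s) u := by
    intro s hs
    rw [lintegral_indicator measurableSet_Ioi, Measure.restrict_restrict measurableSet_Ioi,
      inter_eq_left.2 (Ioi_subset_Ioi (le_of_lt hs))]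
  have hmeas : Measurable (Function.uncurry fun s u => (Ioi s).indicator (F s) u) := by
    convert hF.indicator (measurableSet_lt measurable_fst measurable_snd) using 1
    ext ⟨s, u⟩
    simp only [Function.uncurry_apply_pair, indicator_apply, mem_Ioi, mem_ofPred_eq]
  rw [setLIntegral_congr_fun measurableSet_Ioi hinner, lintegral_lintegral_swap hmeas.aemeasurable]
  refine setLIntegral_congr_fun measurableSet_Ioi fun u _ => ?_
  have hind : (fun s => (Ioi s).indicator (F s) u) = (Iio u).indicator (fun s => F s u) := by
    ext s
    simp only [indicator_apply, mem_Ioi, mem_Iio]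
  rw [hind, lintegral_indicator measurableSet_Iio, Measure.restrict_restrict measurableSet_Iio,
    Iio_inter_Ioi]

theorem setLIntegral_Ioo_pow_div_factorial (n : ℕ) {u : ℝ} (hu : 0 ≤ u) :
    ∫⁻ s in Ioo 0 u, ENNReal.ofReal (s ^ n / n.factorial)
      = ENNReal.ofReal (u ^ (n + 1) / (n + 1).factorial) := by
  rw [← ofReal_integral_eq_lintegral_ofReal, integral_Ioc_eq_integral_Ioo.symm,
    ← intervalIntegral.integral_of_le hu, intervalIntegral.integral_div, integral_pow]
  · rw [zero_pow n.succ_ne_zero, sub_zero, div_div, Nat.factorial_succ, Nat.cast_mul,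
      Nat.cast_succ, mul_comm]
  · exact (continuous_pow n |>.div_const _).integrableOn_Icc.mono_set Ioo_subset_Icc_self
  · filter_upwards [ae_restrict_mem measurableSet_Ioo] with s hs
    exact div_nonneg (pow_nonneg hs.1.le n) (by positivity)

theorem setLIntegral_orthant_succ {n : ℕ} {F : (Fin (n + 1) → ℝ) → ℝ≥0∞} (hF : Measurable F) :
    ∫⁻ x in {x : Fin (n + 1) → ℝ | ∀ i, 0 ≤ x i}, F x
      = ∫⁻ z in {z : Fin n → ℝ | ∀ i, 0 ≤ z i}, ∫⁻ y in Ioi 0, F (Fin.cons y z) := by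
  let e := MeasurableEquiv.piFinSuccAbove (fun _ : Fin (n + 1) => ℝ) 0
  have he : ⇑e.symm = fun p => Fin.cons p.1 p.2 := by
    ext p : 1
    simp only [e, MeasurableEquiv.piFinSuccAbove_symm_apply, Fin.insertNthEquiv_zero]
    rfl
  have hpre : e.symm ⁻¹' {x | ∀ i, 0 ≤ x i} = Ici 0 ×ˢ {z | ∀ i, 0 ≤ z i} := by
    ext ⟨y, z⟩
    simp [he, Fin.forall_fin_succ]
  have h := (volume_preserving_piFinSuccAbove (fun _ : Fin (n + 1) => ℝ) 0).symm
    |>.setLIntegral_comp_preimage_emb e.symm.measurableEmbedding F {x | ∀ i, 0 ≤ x i}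
  rw [← h, hpre, he, Measure.volume_eq_prod, ← Measure.prod_restrict, lintegral_prod_symm,
    restrict_Ioi_eq_restrict_Ici]
  exact (he ▸ hF.comp e.symm.measurable).aemeasurable

theorem setLIntegral_orthant_comp_sum (n : ℕ) {f : ℝ → ℝ≥0∞} (hf : Measurable f) :
    ∫⁻ x in {x : Fin (n + 1) → ℝ | ∀ i, 0 ≤ x i}, f (∑ i, x i)
      = ∫⁻ s in Ioi 0, f s * ENNReal.ofReal (s ^ n / n.factorial) := by
  induction n generalizing f with
  | zero =>
    rw [setLIntegral_orthant_succ (F := fun x => f (∑ i, x i)) (by fun_prop)]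
    simp [volume_pi]
  | succ n ih =>
    let g s := ∫⁻ y in Ioi 0, f (y + s)
    have hg : Measurable g :=
      (hf.comp (measurable_snd.add measurable_fst)).lintegral_prod_right'
    calc _ = ∫⁻ z in {z : Fin (n + 1) → ℝ | ∀ i, 0 ≤ z i}, g (∑ i, z i) := by
          rw [setLIntegral_orthant_succ (F := fun x => f (∑ i, x i)) (by fun_prop)]
          simp only [Fin.sum_cons, g]
      _ = ∫⁻ s in Ioi 0, ∫⁻ u in Ioi s, f u * ENNReal.ofReal (s ^ n / n.factorial) := by
          rw [ih hg]
          refine setLIntegral_congr_fun measurableSet_Ioi fun s _ => ?_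
          simp only [g]
          rw [lintegral_mul_const _ hf, setLIntegral_Ioi_comp_add_right, zero_add]
      _ = ∫⁻ u in Ioi 0, ∫⁻ s in Ioo 0 u, f u * ENNReal.ofReal (s ^ n / n.factorial) :=
          lintegral_Ioi_lintegral_Ioi_swap (by fun_prop) 0
      _ = _ := by
          refine setLIntegral_congr_fun measurableSet_Ioi fun u hu => ?_
          rw [lintegral_const_mul _ (by fun_prop), setLIntegral_Ioo_pow_div_factorial n hu.le]

theorem setLIntegral_Icc_ofReal_div {a b c : ℝ} (ha : 0 < a) (hab : a ≤ b) (hc : 0 ≤ c) :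
    ∫⁻ s in Icc a b, ENNReal.ofReal (c / s) = ENNReal.ofReal (c * Real.log (b / a)) := by
  have hpos : ∀ s ∈ Icc a b, 0 < s := fun s hs => ha.trans_le hs.1
  rw [← ofReal_integral_eq_lintegral_ofReal, integral_Icc_eq_integral_Ioc,
    ← intervalIntegral.integral_of_le hab]
  · simp only [div_eq_mul_inv c]
    rw [intervalIntegral.integral_const_mul,
      integral_inv (by rw [uIcc_of_le hab]; exact fun h => (hpos 0 h).false)]
  · exact continuousOn_const.div continuousOn_id (fun s hs => (hpos s hs).ne')
      |>.integrableOn_compact isCompact_Icc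
  · filter_upwards [ae_restrict_mem measurableSet_Icc] with s hs
    exact div_nonneg hc (hpos s hs).le

theorem setLIntegral_Ioi_maxLikelihood_mul_pow_div_factorial (k : ℕ) {M a b : ℝ} (hM : 0 < M)
    (ha : 0 < a) (hab : a ≤ b) :
    ∫⁻ s in Ioi 0, ENNReal.ofReal ((s / M)⁻¹ ^ (k + 1) * Real.exp (-M))
        * (Icc a b).indicator (fun _ => 1) (s / M) * ENNReal.ofReal (s ^ k / k.factorial)
      = ENNReal.ofReal (M ^ (k + 1) * Real.exp (-M) / k.factorial * Real.log (b / a)) := by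
  set c := M ^ (k + 1) * Real.exp (-M) / k.factorial with hc
  have hintegrand : ∀ s ∈ Ioi (0 : ℝ),
      ENNReal.ofReal ((s / M)⁻¹ ^ (k + 1) * Real.exp (-M))
          * (Icc a b).indicator (fun _ => 1) (s / M) * ENNReal.ofReal (s ^ k / k.factorial)
        = (Icc (a * M) (b * M)).indicator (fun s => ENNReal.ofReal (c / s)) s := by
    intro s (hs : 0 < s)
    simp only [indicator_apply, mem_Icc, le_div_iff₀ hM, div_le_iff₀ hM]
    split_ifs
    · rw [mul_one, ← ENNReal.ofReal_mul (by positivity), hc, inv_div, div_pow]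
      congr 1
      field_simp
      ring
    · simp
  have habM : a * M ≤ b * M := mul_le_mul_of_nonneg_right hab hM.le
  rw [setLIntegral_congr_fun measurableSet_Ioi hintegrand, lintegral_indicator measurableSet_Icc,
    Measure.restrict_restrict measurableSet_Icc,
    inter_eq_left.2 ((Icc_subset_Ioi_iff habM).2 (by positivity)),
    setLIntegral_Icc_ofReal_div (by positivity) habM (by positivity),
    mul_div_mul_right _ _ hM.ne']

/-- the luckiness model complexity of the `N`-sample exponential model
with luckiness the indicator of `[θ_min, θ_max]` equals
`(N^N/Γ(N))·e^{−N}·log(θ_max/θ_min)`. Here the maximized likelihood at data `x` is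
`p[(μ_{θ̂(x)})^N](x) = θ̂(x)^{−N} e^{−N}` with `θ̂(x) = (∑ xₙ)/N` the sample mean,
and the integral is over the data space `(ℝ≥0)^N` w.r.t. `N`-dimensional Lebesgue
measure. -/
theorem exponential_LMC (N : ℕ) (hN : 0 < N) (θmin θmax : ℝ)
    (h0 : 0 < θmin) (h1 : θmin < θmax) :
    ∫⁻ x in {x : Fin N → ℝ | ∀ n, 0 ≤ x n},
        ENNReal.ofReal ((((∑ n, x n) / N)⁻¹) ^ N * Real.exp (-(N : ℝ)))
          * Set.indicator (Set.Icc θmin θmax) (fun _ => (1 : ℝ≥0∞)) ((∑ n, x n) / N)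
        ∂volume
      = ENNReal.ofReal ((N ^ N / Real.Gamma N) * Real.exp (-(N : ℝ))
          * Real.log (θmax / θmin)) := by
  obtain ⟨k, rfl⟩ : ∃ k, N = k + 1 := ⟨N - 1, by omega⟩
  set M : ℝ := ((k + 1 : ℕ) : ℝ)
  have hGamma : Real.Gamma M = k.factorial := by simp [M, Real.Gamma_nat_eq_factorial]
  let f (s : ℝ) := ENNReal.ofReal ((s / M)⁻¹ ^ (k + 1) * Real.exp (-M))
    * (Icc θmin θmax).indicator (fun _ => 1) (s / M)
  have hf : Measurable f :=
    (ENNReal.measurable_ofReal.comp (by fun_prop)).mul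
      ((measurable_const.indicator measurableSet_Icc).comp (measurable_id.div_const M))
  change ∫⁻ x in {x : Fin (k + 1) → ℝ | ∀ n, 0 ≤ x n}, f (∑ n, x n) = _
  rw [setLIntegral_orthant_comp_sum k hf,
    setLIntegral_Ioi_maxLikelihood_mul_pow_div_factorial k (by positivity) h0 h1.le, hGamma]
  congr 1
  ring
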